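/- arXiv:1404.0198 — 8 statements merged into one kernel-verified Lean document; each statement's English description precedes it below -/
import Mathlib

section
/- A congruent embedding by a Markov mapping p ↦ pQ is an isometry for the Fisher metric: if Q is an m×n row-stochastic partition matrix (each column having exactly one positive entry), p ∈ Δ_{m-1}°, and u, v ∈ R^m with sum_i u_i = 0 = sum_i v_i, then sum_{j=1}^n (uQ)_j (vQ)_j / (pQ)_j = sum_{i=1}^m u_i v_i / p_i. -/
/-!
Column `j` of `Q` is supported on row `part j`, so `(fQ)_j = f_{part j} Q_{part j, j}` for every
row vector `f`. Each summand of the pulled-back metric is then `(u_i v_i / p_i) Q_{ij}` with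
`i = part j`, and summing over the block `part⁻¹ {i}`, whose entries sum to `1`, returns
`u_i v_i / p_i`.
-/

section PartitionMatrix

variable {ι κ R : Type*} [Fintype ι]
  {Q : Matrix ι κ R} {part : κ → ι}

theorem sum_mul_apply_eq_of_support_subset_part [NonUnitalNonAssocSemiring R]
    (hsupp : ∀ i j, Q i j ≠ 0 → part j = i) (f : ι → R) (j : κ) :
    ∑ i, f i * Q i j = f (part j) * Q (part j) j := by
  refine Finset.sum_eq_single (part j) (fun i _ hne => ?_) (by simp)
  by_cases hQ : Q i j = 0
  · rw [hQ, mul_zero]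
  · exact absurd (hsupp i j hQ).symm hne

theorem sum_mul_apply_part_eq_sum [Fintype κ] [DecidableEq ι] [NonAssocSemiring R]
    (hsum : ∀ i, ∑ j ∈ Finset.univ.filter (fun j => part j = i), Q i j = 1) (g : ι → R) :
    ∑ j, g (part j) * Q (part j) j = ∑ i, g i := by
  rw [← Finset.sum_fiberwise Finset.univ part]
  refine Finset.sum_congr rfl fun i _ => ?_
  calc ∑ j ∈ Finset.univ.filter (fun j => part j = i), g (part j) * Q (part j) j
      = ∑ j ∈ Finset.univ.filter (fun j => part j = i), g i * Q i j :=
        Finset.sum_congr rfl fun j hj => by rw [(Finset.mem_filter.mp hj).2]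
    _ = g i := by rw [← Finset.mul_sum, hsum i, mul_one]

end PartitionMatrix

theorem mul_mul_mul_div_mul_right_eq_div_mul {K : Type*} [Field K] (a b c q : K) :
    a * q * (b * q) / (c * q) = a * b / c * q := by
  rcases eq_or_ne q 0 with rfl | hq
  · simp
  · rw [mul_mul_mul_comm, ← mul_assoc, mul_div_mul_right _ _ hq, mul_div_right_comm]

theorem markov_map_fisher_isometry_simplex_general {m n : ℕ}
    (Q : Matrix (Fin m) (Fin n) ℝ) (part : Fin n → Fin m)
    (hsupp : ∀ i j, Q i j ≠ 0 → part j = i)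
    (hsum : ∀ i : Fin m,
      ∑ j ∈ Finset.univ.filter (fun j => part j = i), Q i j = 1)
    (p : Fin m → ℝ) (u v : Fin m → ℝ) :
    ∑ j, (∑ i, u i * Q i j) * (∑ i, v i * Q i j) / (∑ i, p i * Q i j)
      = ∑ i, u i * v i / p i := by
  simp only [sum_mul_apply_eq_of_support_subset_part hsupp,
    mul_mul_mul_div_mul_right_eq_div_mul]
  exact sum_mul_apply_part_eq_sum hsum fun i => u i * v i / p i

/-- A congruent embedding by a Markov mapping `p ↦ pQ` is an isometry for
the Fisher metric on the open probability simplex: if `Q` is an `m × n` row-stochastic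
partition matrix (each column `j` has its unique nonzero entry, which is positive, in
row `part j`, and the blocks of each row sum to `1`), `p ∈ Δ_{m-1}°`, and `u, v` are
tangent vectors (coordinates summing to zero), then
`∑_j (uQ)_j (vQ)_j / (pQ)_j = ∑_i u_i v_i / p_i`. -/
theorem markov_map_fisher_isometry_simplex {m n : ℕ}
    (Q : Matrix (Fin m) (Fin n) ℝ) (part : Fin n → Fin m)
    (hsupp : ∀ i j, Q i j ≠ 0 → part j = i)
    (hpos : ∀ j, 0 < Q (part j) j)
    (hsum : ∀ i : Fin m,
      ∑ j ∈ Finset.univ.filter (fun j => part j = i), Q i j = 1)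
    (p : Fin m → ℝ) (hp : ∀ i, 0 < p i) (hp1 : ∑ i, p i = 1)
    (u v : Fin m → ℝ) (hu : ∑ i, u i = 0) (hv : ∑ i, v i = 0) :
    ∑ j, (∑ i, u i * Q i j) * (∑ i, v i * Q i j) / (∑ i, p i * Q i j)
      = ∑ i, u i * v i / p i :=
  markov_map_fisher_isometry_simplex_general Q part hsupp hsum p u v
end

section
/- Metrics of Campbell's form are invariant under Markov maps: fix smooth functions A, C on R_+ and for each m define a bilinear form on R_+^m by g_p^{(m)}(u,v) = A(|p|) (sum_i u_i)(sum_j v_j) + C(|p|) |p| sum_i u_i v_i / p_i, where |p| = sum_i p_i. Then for every m×n row-stochastic partition matrix Q and every p ∈ R_+^m, u, v ∈ R^m, one has g_{pQ}^{(n)}(uQ, vQ) = g_p^{(m)}(u,v). -/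
/-- Metrics of Campbell's form are invariant under Markov maps. Fix smooth
functions `A, C` and define `g_p^{(m)}(u,v) = A(|p|)(∑_i u_i)(∑_j v_j) + C(|p|)|p| ∑_i u_i v_i / p_i`
on `R_+^m`. Then for every `m × n` row-stochastic partition matrix `Q`, every strictly
positive `p` and all `u, v`, one has `g_{pQ}^{(n)}(uQ, vQ) = g_p^{(m)}(u,v)`. -/
theorem campbell_metric_invariant {m n : ℕ}
    (A C : ℝ → ℝ) (hA : ContDiff ℝ (⊤ : ℕ∞) A) (hC : ContDiff ℝ (⊤ : ℕ∞) C)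
    (Q : Matrix (Fin m) (Fin n) ℝ) (part : Fin n → Fin m)
    (hsupp : ∀ i j, Q i j ≠ 0 → part j = i)
    (hpos : ∀ j, 0 < Q (part j) j)
    (hsum : ∀ i : Fin m,
      ∑ j ∈ Finset.univ.filter (fun j => part j = i), Q i j = 1)
    (p : Fin m → ℝ) (hp : ∀ i, 0 < p i) (u v : Fin m → ℝ) :
    A (∑ j, (∑ i, p i * Q i j)) * (∑ j, (∑ i, u i * Q i j)) * (∑ j, (∑ i, v i * Q i j))
      + C (∑ j, (∑ i, p i * Q i j)) * (∑ j, (∑ i, p i * Q i j))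
        * ∑ j, (∑ i, u i * Q i j) * (∑ i, v i * Q i j) / (∑ i, p i * Q i j)
    = A (∑ i, p i) * (∑ i, u i) * (∑ i, v i)
      + C (∑ i, p i) * (∑ i, p i) * ∑ i, u i * v i / p i := by
  -- column j of Q has a single nonzero entry, at row `part j`
  have hcol : ∀ (w : Fin m → ℝ) (j : Fin n),
      (∑ i, w i * Q i j) = w (part j) * Q (part j) j := by
    intro w j
    refine Finset.sum_eq_single (part j) (fun i _ hi => ?_) (by simp)
    have : Q i j = 0 := by
      by_contra h
      exact hi (hsupp i j h).symm
    simp [this]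
  -- group a sum over j by fibers of `part`
  have hgroup : ∀ (f : Fin m → ℝ),
      (∑ j, f (part j) * Q (part j) j) = ∑ i, f i := by
    intro f
    rw [← Finset.sum_fiberwise Finset.univ part (fun j => f (part j) * Q (part j) j)]
    refine Finset.sum_congr rfl fun i _ => ?_
    calc ∑ j ∈ Finset.univ.filter (fun j => part j = i), f (part j) * Q (part j) j
        = ∑ j ∈ Finset.univ.filter (fun j => part j = i), f i * Q i j := by
          refine Finset.sum_congr rfl fun j hj => ?_
          rw [(Finset.mem_filter.mp hj).2]
      _ = f i * ∑ j ∈ Finset.univ.filter (fun j => part j = i), Q i j := by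
          rw [Finset.mul_sum]
      _ = f i := by rw [hsum i, mul_one]
  have hP : (∑ j, (∑ i, p i * Q i j)) = ∑ i, p i := by
    simp_rw [hcol p]; exact hgroup p
  have hU : (∑ j, (∑ i, u i * Q i j)) = ∑ i, u i := by
    simp_rw [hcol u]; exact hgroup u
  have hV : (∑ j, (∑ i, v i * Q i j)) = ∑ i, v i := by
    simp_rw [hcol v]; exact hgroup v
  have hF : (∑ j, (∑ i, u i * Q i j) * (∑ i, v i * Q i j) / (∑ i, p i * Q i j))
      = ∑ i, u i * v i / p i := by
    have : ∀ j, (∑ i, u i * Q i j) * (∑ i, v i * Q i j) / (∑ i, p i * Q i j)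
        = (u (part j) * v (part j) / p (part j)) * Q (part j) j := by
      intro j
      rw [hcol u, hcol v, hcol p]
      have hq := (hpos j).ne'
      have hpj := (hp (part j)).ne'
      field_simp
    simp_rw [this]
    exact hgroup (fun i => u i * v i / p i)
  rw [hP, hU, hV, hF]
end

section
/- The quadratic form G on R^{k×m} given by G(V) = A (sum_{ab} V_{ab})^2 + B sum_a (|M|/|M_a|) (sum_b V_{ab})^2 + C sum_{ab} (|M|/M_{ab}) V_{ab}^2, for a fixed matrix M ∈ R_+^{k×m} with row sums |M_a| and total sum |M|, is positive definite for all choices of M ∈ R_+^{k×m} (over all k ≥ 1, m ≥ 2) if and only if C > 0, B + C > 0, and A + B + C > 0. -/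
/-- The quadratic form
`G(V) = A (∑_{ab} V_{ab})² + B ∑_a (|M|/|M_a|)(∑_b V_{ab})² + C ∑_{ab} (|M|/M_{ab}) V_{ab}²`
is positive definite for all strictly positive matrices `M ∈ R_+^{k×m}` (over all
`k ≥ 1`, `m ≥ 2`) if and only if `C > 0`, `B + C > 0`, and `A + B + C > 0`. -/
theorem lebanon_metric_positive_definite_iff (A B C : ℝ) :
    (∀ (k m : ℕ), 1 ≤ k → 2 ≤ m →
      ∀ M : Matrix (Fin k) (Fin m) ℝ, (∀ a b, 0 < M a b) →
      ∀ V : Matrix (Fin k) (Fin m) ℝ, V ≠ 0 →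
        0 < A * (∑ a, ∑ b, V a b) ^ 2
            + B * ∑ a, ((∑ a', ∑ b', M a' b') / (∑ b', M a b')) * (∑ b, V a b) ^ 2
            + C * ∑ a, ∑ b, ((∑ a', ∑ b', M a' b') / M a b) * (V a b) ^ 2)
    ↔ (0 < C ∧ 0 < B + C ∧ 0 < A + B + C) := by
  constructor
  · intro h
    refine ⟨?_, ?_, ?_⟩
    · -- C > 0 : k=1, m=2, M = 1, V = (1, -1)
      have := h 1 2 le_rfl le_rfl (fun _ _ => 1) (fun _ _ => one_pos)
        ![![1, -1]] (by
          intro hV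
          have := congrFun (congrFun hV 0) 0
          norm_num at this)
      simp [Fin.sum_univ_two, Fin.sum_univ_one] at this
      linarith
    · -- B + C > 0 : k=2, m=2, M = 1, V = ((1,1),(-1,-1))
      have := h 2 2 (by norm_num) le_rfl (fun _ _ => 1) (fun _ _ => one_pos)
        ![![1, 1], ![-1, -1]] (by
          intro hV
          have := congrFun (congrFun hV 0) 0
          norm_num at this)
      simp [Fin.sum_univ_two] at this
      linarith
    · -- A + B + C > 0 : k=1, m=2, M = 1, V = (1, 1)
      have := h 1 2 le_rfl le_rfl (fun _ _ => 1) (fun _ _ => one_pos)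
        ![![1, 1]] (by
          intro hV
          have := congrFun (congrFun hV 0) 0
          norm_num at this)
      simp [Fin.sum_univ_two, Fin.sum_univ_one] at this
      linarith
  · rintro ⟨hC, hBC, hABC⟩ k m hk hm M hM V hV
    haveI : Nonempty (Fin m) := Fin.pos_iff_nonempty.mp (by omega)
    haveI : Nonempty (Fin k) := Fin.pos_iff_nonempty.mp (by omega)
    set S : ℝ := ∑ a', ∑ b', M a' b' with hSdef
    have hRa : ∀ a, 0 < ∑ b, M a b :=
      fun a => Finset.sum_pos (fun b _ => hM a b) Finset.univ_nonempty
    have hS : 0 < S :=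
      Finset.sum_pos (fun a _ => hRa a) Finset.univ_nonempty
    set s : ℝ := ∑ a, ∑ b, V a b with hsdef
    set T : ℝ := ∑ a, (S / (∑ b', M a b')) * (∑ b, V a b) ^ 2 with hTdef
    set U : ℝ := ∑ a, ∑ b, (S / M a b) * (V a b) ^ 2 with hUdef
    -- U > 0
    have hex : ∃ a b, V a b ≠ 0 := by
      by_contra hcon
      push_neg at hcon
      exact hV (by ext a b; simp [hcon])
    obtain ⟨a0, b0, hb0⟩ := hex
    have hU : 0 < U := by
      have hterm : ∀ a b, (0 : ℝ) ≤ (S / M a b) * (V a b) ^ 2 :=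
        fun a b => mul_nonneg (div_nonneg hS.le (hM a b).le) (sq_nonneg _)
      refine Finset.sum_pos' (fun a _ => Finset.sum_nonneg fun b _ => hterm a b) ⟨a0, Finset.mem_univ a0, ?_⟩
      refine Finset.sum_pos' (fun b _ => hterm a0 b) ⟨b0, Finset.mem_univ b0, ?_⟩
      exact mul_pos (div_pos hS (hM a0 b0))
        (lt_of_le_of_ne (sq_nonneg _) (Ne.symm (pow_ne_zero 2 hb0)))
    -- T ≤ U  (row-wise Cauchy-Schwarz)
    have h2 : T ≤ U := by
      apply Finset.sum_le_sum
      intro a _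
      have key := Finset.sq_sum_div_le_sum_sq_div Finset.univ (fun b => V a b)
        (g := fun b => M a b) (fun b _ => hM a b)
      have hrw : ∑ b, (S / M a b) * (V a b) ^ 2 = S * ∑ b, (V a b) ^ 2 / M a b := by
        rw [Finset.mul_sum]
        exact Finset.sum_congr rfl fun b _ => by ring
      calc S / (∑ b', M a b') * (∑ b, V a b) ^ 2
          = S * ((∑ b, V a b) ^ 2 / (∑ b, M a b)) := by ring
        _ ≤ S * ∑ b, (V a b) ^ 2 / M a b := mul_le_mul_of_nonneg_left key hS.le
        _ = ∑ b, (S / M a b) * (V a b) ^ 2 := hrw.symm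
    -- s² ≤ T  (Cauchy-Schwarz over rows)
    have h1 : s ^ 2 ≤ T := by
      have key := Finset.sq_sum_div_le_sum_sq_div Finset.univ (fun a => ∑ b, V a b)
        (g := fun a => ∑ b, M a b) (fun a _ => hRa a)
      rw [div_le_iff₀ hS] at key
      have hrw : T = (∑ a, (∑ b, V a b) ^ 2 / (∑ b, M a b)) * S := by
        rw [Finset.sum_mul]
        exact Finset.sum_congr rfl fun a _ => by ring
      rw [hrw]
      exact key
    -- combine
    have hc0 : 0 < min C (min (B + C) (A + B + C)) := lt_min hC (lt_min hBC hABC)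
    set c0 : ℝ := min C (min (B + C) (A + B + C)) with hc0def
    have e1 : c0 * s ^ 2 ≤ (A + B + C) * s ^ 2 :=
      mul_le_mul_of_nonneg_right ((min_le_right _ _).trans (min_le_right _ _)) (sq_nonneg s)
    have e2 : c0 * (T - s ^ 2) ≤ (B + C) * (T - s ^ 2) :=
      mul_le_mul_of_nonneg_right ((min_le_right _ _).trans (min_le_left _ _)) (by linarith)
    have e3 : c0 * (U - T) ≤ C * (U - T) :=
      mul_le_mul_of_nonneg_right (min_le_left _ _) (by linarith)
    have e4 : 0 < c0 * U := mul_pos hc0 hU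
    nlinarith [e1, e2, e3, e4]
end

section
/- Necessity direction of positive-definiteness: if the quadratic form G(V) = A (sum V_{ab})^2 + B sum_a (|M|/|M_a|)(sum_b V_{ab})^2 + C sum_{ab} (|M|/M_{ab}) V_{ab}^2 is positive definite for every M ∈ R_+^{k×m} and all k ≥ 1, m ≥ 2, then C ≥ 0, B + C ≥ 0, and A + B + C ≥ 0. -/
/-- Necessity direction of positive-definiteness. If the quadratic form
`G(V) = A (∑ V_{ab})² + B ∑_a (|M|/|M_a|)(∑_b V_{ab})² + C ∑_{ab} (|M|/M_{ab}) V_{ab}²`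
is positive definite for every strictly positive `M ∈ R_+^{k×m}` and all `k ≥ 1`,
`m ≥ 2`, then `C ≥ 0`, `B + C ≥ 0`, and `A + B + C ≥ 0`. -/
theorem lebanon_metric_positive_definite_necessary (A B C : ℝ)
    (hpd : ∀ (k m : ℕ), 1 ≤ k → 2 ≤ m →
      ∀ M : Matrix (Fin k) (Fin m) ℝ, (∀ a b, 0 < M a b) →
      ∀ V : Matrix (Fin k) (Fin m) ℝ, V ≠ 0 →
        0 < A * (∑ a, ∑ b, V a b) ^ 2
            + B * ∑ a, ((∑ a', ∑ b', M a' b') / (∑ b', M a b')) * (∑ b, V a b) ^ 2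
            + C * ∑ a, ∑ b, ((∑ a', ∑ b', M a' b') / M a b) * (V a b) ^ 2) :
    0 ≤ C ∧ 0 ≤ B + C ∧ 0 ≤ A + B + C := by
  refine ⟨?_, ?_, ?_⟩
  · have h := hpd 1 2 le_rfl le_rfl (fun _ _ => 1) (fun _ _ => one_pos)
      (fun _ b => if b = 0 then 1 else -1) ?_
    · simp [Fin.sum_univ_two] at h
      linarith
    · intro h
      have := congrFun (congrFun h 0) 0
      simp at this
  · have h := hpd 2 2 one_le_two le_rfl (fun _ _ => 1) (fun _ _ => one_pos)
      (fun a _ => if a = 0 then (1:ℝ)/2 else -(1/2)) ?_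
    · simp [Fin.sum_univ_two] at h
      norm_num at h
      linarith
    · intro h
      have := congrFun (congrFun h 0) 0
      simp at this
  · have h := hpd 1 2 le_rfl le_rfl (fun _ _ => 1) (fun _ _ => one_pos)
      (fun _ _ => 1) ?_
    · simp [Fin.sum_univ_two] at h
      linarith
    · intro h
      have := congrFun (congrFun h 0) 0
      simp at this
end

section
/- Conditional embeddings are injective on positive stochastic matrices: with R̄ a k×l partition indicator matrix and Q^{(a)} m×n row-stochastic partition matrices whose nonzero entries are positive, the map K ↦ R̄^T (K ⊗ Q) on k×m row-stochastic matrices with strictly positive entries is injective. -/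
/-- Conditional embeddings are injective on positive stochastic matrices.
With `R̄` the indicator matrix of a partition of `[l]` into `k` nonempty blocks (i.e.
`part : Fin l → Fin k` surjective) and `Q⁽ᵃ⁾` row-stochastic `m × n` partition matrices
(each column has exactly one nonzero entry, which is positive), the map
`K ↦ R̄ᵀ (K ⊗ Q)` is injective on `k × m` row-stochastic matrices with strictly
positive entries. -/
theorem conditional_embedding_injective {k l m n : ℕ}
    (part : Fin l → Fin k) (hsurj : Function.Surjective part)
    (Q : Fin k → Matrix (Fin m) (Fin n) ℝ)
    (colpart : Fin k → Fin n → Fin m)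
    (hQ0 : ∀ a b j, 0 ≤ Q a b j)
    (hQsupp : ∀ a b j, Q a b j ≠ 0 → colpart a j = b)
    (hQpos : ∀ a j, 0 < Q a (colpart a j) j)
    (hQsum : ∀ a (b : Fin m),
      ∑ j ∈ Finset.univ.filter (fun j => colpart a j = b), Q a b j = 1)
    (K K' : Matrix (Fin k) (Fin m) ℝ)
    (hKpos : ∀ a b, 0 < K a b) (hKrow : ∀ a, ∑ b, K a b = 1)
    (hK'pos : ∀ a b, 0 < K' a b) (hK'row : ∀ a, ∑ b, K' a b = 1)
    (heq : ∀ (s : Fin l) (t : Fin n),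
      ∑ a, (if part s = a then (1 : ℝ) else 0) * ∑ b, K a b * Q a b t
        = ∑ a, (if part s = a then (1 : ℝ) else 0) * ∑ b, K' a b * Q a b t) :
    K = K' := by
  have key : ∀ a t, ∑ b, K a b * Q a b t = ∑ b, K' a b * Q a b t := by
    intro a t
    obtain ⟨s, hs⟩ := hsurj a
    have h := heq s t
    simpa [hs, Finset.sum_ite_eq, ite_mul] using h
  ext a b
  obtain ⟨t, ht⟩ : ∃ t, colpart a t = b := by
    by_contra h
    push_neg at h
    have hq := hQsum a b
    rw [Finset.filter_false_of_mem (fun j _ => h j)] at hq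
    simp at hq
  have h1 : ∀ (M : Matrix (Fin k) (Fin m) ℝ),
      ∑ b', M a b' * Q a b' t = M a b * Q a b t := by
    intro M
    refine Finset.sum_eq_single b (fun b' _ hb' => ?_) (by simp)
    have hz : Q a b' t = 0 := by
      by_contra hq
      exact hb' ((ht.symm.trans (hQsupp a b' t hq)).symm)
    simp [hz]
  have h2 := key a t
  rw [h1 K, h1 K'] at h2
  have hq : Q a b t ≠ 0 := by
    have := hQpos a t
    rw [ht] at this
    exact ne_of_gt this
  exact mul_right_cancel₀ hq h2
end

section
/- Non-existence of fully invariant metrics (A must vanish): suppose for each k ≥ 1, m ≥ 2 we have a metric of the form g_M^{(k,m)}(∂_{ab}, ∂_{cd}) = A/k² + δ_{ac}(B/k + δ_{bd} |M| C /(M_{ab} k²)) on R_+^{k×m}, and suppose these metrics are invariant under ALL conditional embeddings f(M) = R̄^T(M ⊗ Id) for arbitrary (not necessarily homogeneous) partition indicator matrices R̄ of partitions of [l] into k blocks. If there is a partition of [l] into k blocks with two blocks each of size strictly greater than l/k (requiring k ≥ 2 and suitable l), then A = 0. -/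
/-- Non-existence of fully invariant metrics (the constant `A` must
vanish). Suppose for each `k ≥ 1`, `m ≥ 2` the metric
`g_M^{(k,m)}(∂_{ab},∂_{cd}) = A/k² + δ_{ac}(B/k + δ_{bd} |M| C /(M_{ab} k²))`
on `R_+^{k×m}` is invariant under all conditional embeddings `f(M) = R̄ᵀ(M ⊗ Id)` for
arbitrary (not necessarily homogeneous) partition indicator matrices `R̄` of surjective
partitions `part : Fin l → Fin k` (with push-forward `f_*(∂_{ab}) = ∑_i R̄_{ai} ∂'_{ib}`).
If there is a partition of `[l]` into `k ≥ 2` blocks with two blocks each of size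
strictly greater than `l/k`, then `A = 0`. -/
theorem no_fully_invariant_metric_A_zero (A B C : ℝ)
    (hinv : ∀ (k l m : ℕ), 1 ≤ k → 2 ≤ m →
      ∀ part : Fin l → Fin k, Function.Surjective part →
      ∀ M u v : Matrix (Fin k) (Fin m) ℝ, (∀ a b, 0 < M a b) →
        ((fun (N U V : Matrix (Fin l) (Fin m) ℝ) =>
            ∑ i, ∑ b, ∑ s, ∑ d, U i b * V s d *
              (A / (l : ℝ) ^ 2 +
                if i = s then
                  (B / (l : ℝ) +
                    if b = d then (∑ i', ∑ b', N i' b') * C / (N i b * (l : ℝ) ^ 2)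
                    else 0)
                else 0))
          (fun s b => ∑ a, (if part s = a then (1 : ℝ) else 0) * M a b)
          (fun s b => ∑ a, (if part s = a then (1 : ℝ) else 0) * u a b)
          (fun s b => ∑ a, (if part s = a then (1 : ℝ) else 0) * v a b))
        = ∑ a, ∑ b, ∑ c, ∑ d, u a b * v c d *
            (A / (k : ℝ) ^ 2 +
              if a = c then
                (B / (k : ℝ) +
                  if b = d then (∑ a', ∑ b', M a' b') * C / (M a b * (k : ℝ) ^ 2)
                  else 0)
              else 0))
    (hpart : ∃ (k l : ℕ) (part : Fin l → Fin k), 2 ≤ k ∧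
      Function.Surjective part ∧
      ∃ a c : Fin k, a ≠ c ∧
        l < k * (Finset.univ.filter (fun j => part j = a)).card ∧
        l < k * (Finset.univ.filter (fun j => part j = c)).card) :
    A = 0 := by
  obtain ⟨k, l, part, hk, hsurj, a0, c0, hac, hna, hnc⟩ := hpart
  have hk1 : 1 ≤ k := le_trans (by norm_num) hk
  -- l is positive since part is surjective to nonempty Fin k
  have hl0 : 0 < l := by
    rcases hsurj ⟨0, hk1⟩ with ⟨j, _⟩
    exact j.pos
  set na := (Finset.univ.filter (fun j => part j = a0)).card with hna_def
  set nc := (Finset.univ.filter (fun j => part j = c0)).card with hnc_def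
  -- choose M = all ones, u,v basis vectors
  have key := hinv k l 2 hk1 le_rfl part hsurj
    (fun _ _ => 1)
    (fun a b => if a = a0 then (if b = 0 then (1:ℝ) else 0) else 0)
    (fun a b => if a = c0 then (if b = 0 then (1:ℝ) else 0) else 0)
    (fun _ _ => one_pos)
  simp only [ite_mul, mul_ite, zero_mul, mul_zero, one_mul, mul_one,
    Finset.sum_ite_eq', Finset.mem_univ, if_true] at key
  simp only [Fin.sum_univ_two, if_pos rfl, hac, if_neg (by decide : ¬ (1:Fin 2) = 0),
    if_neg hac, add_zero, zero_add, if_true, ite_self, Finset.sum_const_zero,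
    Finset.sum_ite_eq', Finset.mem_univ, hac, if_false] at key
  have key2 : (∑ x : Fin l, ∑ x1 : Fin l,
      if part x1 = c0 then (if part x = a0 then A/(l:ℝ)^2 else 0) else 0)
      = A/(k:ℝ)^2 := by
    rw [← key]
    refine Finset.sum_congr rfl fun x _ => Finset.sum_congr rfl fun x1 _ => ?_
    by_cases h1 : part x1 = c0 <;> by_cases h2 : part x = a0 <;>
      simp only [h1, h2, if_true, if_false]
    have hne : x ≠ x1 := fun h => hac (h2.symm.trans (by rw [h]; exact h1))
    rw [if_neg hne, add_zero]
  -- evaluate the double sum of indicator constants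
  have key3 : (nc : ℝ) * ((na : ℝ) * (A/(l:ℝ)^2)) = A/(k:ℝ)^2 := by
    rw [← key2]
    have step : ∀ x : Fin l, (∑ x1 : Fin l,
        if part x1 = c0 then (if part x = a0 then A/(l:ℝ)^2 else 0) else 0)
        = (nc:ℝ) * (if part x = a0 then A/(l:ℝ)^2 else 0) := fun x => by
      rw [← Finset.sum_filter, Finset.sum_const, nsmul_eq_mul]
    rw [Finset.sum_congr rfl (fun x _ => step x), ← Finset.mul_sum,
      ← Finset.sum_filter, Finset.sum_const, nsmul_eq_mul]
  -- now derive A = 0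
  have hl : (0:ℝ) < (l:ℝ) := by exact_mod_cast hl0
  have hkk : (0:ℝ) < (k:ℝ) := by exact_mod_cast lt_of_lt_of_le two_pos hk
  have hlt : (l:ℝ) * (l:ℝ) < ((k:ℝ) * na) * ((k:ℝ) * nc) := by
    have h1 : (l:ℝ) < (k:ℝ) * na := by exact_mod_cast hna
    have h2 : (l:ℝ) < (k:ℝ) * nc := by exact_mod_cast hnc
    exact mul_lt_mul'' h1 h2 hl.le hl.le
  have hfact : A * (((k:ℝ) * na) * ((k:ℝ) * nc) - (l:ℝ) * (l:ℝ)) = 0 := by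
    field_simp at key3
    nlinarith [key3]
  rcases mul_eq_zero.mp hfact with h | h
  · exact h
  · linarith
end

section
/- Commutation of joint and conditional embeddings: let R be a k×l row-stochastic partition matrix with partition indicator matrix R̄, Q a collection of m×n row-stochastic partition matrices, ρ ∈ Δ_{k-1}°, ρ' = ρR, and K a k×m row-stochastic matrix. Then ψ_{ρ'}(R̄^T(K ⊗ Q)) = R^T(ψ_ρ(K) ⊗ Q), i.e., the diagram with f(P) = R^T(P⊗Q) and f̄(K) = R̄^T(K⊗Q) commutes: ψ_{ρ'} ∘ f̄ = f ∘ ψ_ρ. -/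
theorem Matrix.sum_mul_eq_of_col_support {ι κ α : Type*} [Fintype ι]
    [NonUnitalNonAssocSemiring α] (R : Matrix ι κ α) (part : κ → ι)
    (hR : ∀ a s, R a s ≠ 0 → part s = a) (s : κ) (g : ι → α) :
    ∑ a, R a s * g a = R (part s) s * g (part s) :=
  Finset.sum_eq_single_of_mem _ (Finset.mem_univ _) fun a _ ha => by
    rw [not_imp_comm.mp (hR a s) (Ne.symm ha), zero_mul]

theorem joint_conditional_embedding_commute_general {k l m n : ℕ}
    (R : Matrix (Fin k) (Fin l) ℝ) (part : Fin l → Fin k)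
    (hRsupp : ∀ a s, R a s ≠ 0 → part s = a)
    (Q : Fin k → Matrix (Fin m) (Fin n) ℝ)
    (ρ : Fin k → ℝ)
    (K : Matrix (Fin k) (Fin m) ℝ) :
    ∀ (s : Fin l) (t : Fin n),
      (∑ a, ρ a * R a s)
          * (∑ a, (if part s = a then (1 : ℝ) else 0) * ∑ b, K a b * Q a b t)
        = ∑ a, R a s * ∑ b, (ρ a * K a b) * Q a b t := by
  intro s t
  -- Column `s` of both `R` and `R̄` is supported on the row `part s`, so every sum over `a`
  -- collapses to its `a = part s` term.
  have hcol := R.sum_mul_eq_of_col_support part hRsupp s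
  simp_rw [mul_comm (ρ _) (R _ s), hcol, ite_mul, one_mul, zero_mul, Finset.sum_ite_eq,
    Finset.mem_univ, if_true, mul_assoc, ← Finset.mul_sum]

/-- Commutation of joint and conditional embeddings. Let `R` be a
`k × l` row-stochastic partition matrix with partition `part : Fin l → Fin k` and
indicator matrix `R̄_{as} = [part s = a]`, let `Q⁽ᵃ⁾` be `m × n` row-stochastic
partition matrices, `ρ ∈ Δ_{k-1}°`, `ρ' = ρR`, and `K` a `k × m` row-stochastic
matrix. Then `ψ_{ρ'}(R̄ᵀ(K ⊗ Q)) = Rᵀ(ψ_ρ(K) ⊗ Q)`, where `ψ_ρ(K)_{xy} = ρ(x)K_{xy}`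
and `(P ⊗ Q)_{ab} = (P·Q⁽ᵃ⁾)_{ab}`. -/
theorem joint_conditional_embedding_commute {k l m n : ℕ}
    (R : Matrix (Fin k) (Fin l) ℝ) (part : Fin l → Fin k)
    (hR0 : ∀ a s, 0 ≤ R a s)
    (hRsupp : ∀ a s, R a s ≠ 0 → part s = a)
    (hRsum : ∀ a : Fin k,
      ∑ s ∈ Finset.univ.filter (fun s => part s = a), R a s = 1)
    (Q : Fin k → Matrix (Fin m) (Fin n) ℝ)
    (colpart : Fin k → Fin n → Fin m)
    (hQ0 : ∀ a b t, 0 ≤ Q a b t)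
    (hQsupp : ∀ a b t, Q a b t ≠ 0 → colpart a t = b)
    (hQsum : ∀ a (b : Fin m),
      ∑ t ∈ Finset.univ.filter (fun t => colpart a t = b), Q a b t = 1)
    (ρ : Fin k → ℝ) (hρ : ∀ a, 0 < ρ a) (hρ1 : ∑ a, ρ a = 1)
    (K : Matrix (Fin k) (Fin m) ℝ)
    (hK0 : ∀ a b, 0 ≤ K a b) (hKrow : ∀ a, ∑ b, K a b = 1) :
    ∀ (s : Fin l) (t : Fin n),
      (∑ a, ρ a * R a s)
          * (∑ a, (if part s = a then (1 : ℝ) else 0) * ∑ b, K a b * Q a b t)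
        = ∑ a, R a s * ∑ b, (ρ a * K a b) * Q a b t :=
  joint_conditional_embedding_commute_general R part hRsupp Q ρ K
end

section
/- Covariance of weighted metrics under conditional embeddings: with notation as above (R a k×l stochastic partition matrix with indicator R̄, Q^{(a)} m×n stochastic partition matrices, ρ ∈ Δ_{k-1}°, ρ' = ρR assumed strictly positive), the conditional embedding f̄(K) = R̄^T(K ⊗ Q) satisfies f̄*(g^{ρ',n}) = g^{ρ,m}: for every k×m positive stochastic matrix K and tangent vectors u, v with zero row sums, g^{ρ',n}_{f̄(K)}(f̄_* u, f̄_* v) = sum_i ρ(i) sum_j u_{ij} v_{ij} / K_{ij}. -/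
/-! For a column `s` of `R̄` only the block `a = part s` contributes, and each column `t` of
`Q⁽ᵃ⁾` has a single nonzero entry, in row `b = colpart a t`. So the `(s, t)` term of the
pulled-back form is `Q⁽ᵃ⁾_{bt} · u_{ab} v_{ab} / K_{ab}`, and summing over the fibre
`(colpart a)⁻¹(b)` replaces the weights `Q⁽ᵃ⁾_{bt}` by `1`. The same fibre argument for `R`
turns `ρ'(s) = ρ(part s) R_{part s, s}` into `ρ(a)`. -/

open Finset

theorem mul_mul_div_mul_self_right (q x y w : ℝ) :
    q * x * (q * y) / (w * q) = q * (x * y / w) := by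
  rcases eq_or_ne q 0 with rfl | hq
  · simp
  · rw [mul_mul_mul_comm, mul_comm w, mul_assoc, mul_div_mul_left _ _ hq, mul_div_assoc]

namespace Matrix

variable {α β : Type*} {P : Matrix α β ℝ} {part : β → α}

theorem apply_eq_zero_of_ne_part (hsupp : ∀ a s, P a s ≠ 0 → part s = a) {a : α} {s : β}
    (ha : a ≠ part s) : P a s = 0 :=
  by_contra fun h => ha (hsupp a s h).symm

variable [Fintype α]

theorem sum_apply_mul_eq_part (hsupp : ∀ a s, P a s ≠ 0 → part s = a) (s : β) (g : α → ℝ) :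
    ∑ a, P a s * g a = P (part s) s * g (part s) :=
  Fintype.sum_eq_single _ fun _ ha => by rw [apply_eq_zero_of_ne_part hsupp ha, zero_mul]

variable [Fintype β] [DecidableEq α]

theorem sum_apply_part_mul (hsum : ∀ a, ∑ s ∈ univ.filter (fun s => part s = a), P a s = 1)
    (h : α → ℝ) : ∑ s, P (part s) s * h (part s) = ∑ a, h a := by
  rw [← sum_fiberwise univ part]
  refine sum_congr rfl fun a _ => ?_
  calc ∑ s ∈ univ.filter (fun s => part s = a), P (part s) s * h (part s)
      = ∑ s ∈ univ.filter (fun s => part s = a), P a s * h a :=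
        sum_congr rfl fun s hs => by rw [(mem_filter.mp hs).2]
    _ = h a := by rw [← sum_mul, hsum, one_mul]

theorem sum_markov_pushforward_mul_div (hsupp : ∀ a s, P a s ≠ 0 → part s = a)
    (hsum : ∀ a, ∑ s ∈ univ.filter (fun s => part s = a), P a s = 1) (x y w : α → ℝ) :
    ∑ s, (∑ a, P a s * x a) * (∑ a, P a s * y a) / (∑ a, w a * P a s)
      = ∑ a, x a * y a / w a := by
  have denominator (s : β) : ∑ a, w a * P a s = w (part s) * P (part s) s := by
    simpa only [mul_comm (w _)] using sum_apply_mul_eq_part hsupp s w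
  simp only [sum_apply_mul_eq_part hsupp, denominator, mul_mul_div_mul_self_right]
  exact sum_apply_part_mul hsum fun a => x a * y a / w a

end Matrix

theorem weighted_metric_covariant_under_conditional_embedding_general {k l m n : ℕ}
    (R : Matrix (Fin k) (Fin l) ℝ) (part : Fin l → Fin k)
    (hRsupp : ∀ a s, R a s ≠ 0 → part s = a)
    (hRsum : ∀ a : Fin k,
      ∑ s ∈ Finset.univ.filter (fun s => part s = a), R a s = 1)
    (Q : Fin k → Matrix (Fin m) (Fin n) ℝ)
    (colpart : Fin k → Fin n → Fin m)
    (hQsupp : ∀ a b t, Q a b t ≠ 0 → colpart a t = b)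
    (hQsum : ∀ a (b : Fin m),
      ∑ t ∈ Finset.univ.filter (fun t => colpart a t = b), Q a b t = 1)
    (ρ : Fin k → ℝ)
    (K : Matrix (Fin k) (Fin m) ℝ)
    (u v : Matrix (Fin k) (Fin m) ℝ) :
    ∑ s, (∑ a, ρ a * R a s) * ∑ t,
        (∑ a, ∑ b, (if part s = a then (1 : ℝ) else 0) * Q a b t * u a b)
        * (∑ a, ∑ b, (if part s = a then (1 : ℝ) else 0) * Q a b t * v a b)
        / (∑ a, (if part s = a then (1 : ℝ) else 0) * ∑ b, K a b * Q a b t)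
      = ∑ i, ρ i * ∑ j, u i j * v i j / K i j := by
  have weight (s : Fin l) : ∑ a, ρ a * R a s = R (part s) s * ρ (part s) := by
    simpa only [mul_comm (ρ _)] using Matrix.sum_apply_mul_eq_part hRsupp s ρ
  have pushforward (s : Fin l) (t : Fin n) (g : Matrix (Fin k) (Fin m) ℝ) :
      ∑ a, ∑ b, (if part s = a then (1 : ℝ) else 0) * Q a b t * g a b
        = ∑ b, Q (part s) b t * g (part s) b := by
    simp only [ite_mul, one_mul, zero_mul, sum_ite_irrel, sum_const_zero, sum_ite_eq, mem_univ,
      if_true]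
  have denominator (s : Fin l) (t : Fin n) :
      ∑ a, (if part s = a then (1 : ℝ) else 0) * ∑ b, K a b * Q a b t
        = ∑ b, K (part s) b * Q (part s) b t := by
    simp only [ite_mul, one_mul, zero_mul, sum_ite_eq, mem_univ, if_true]
  calc _ = ∑ s, R (part s) s * (ρ (part s) * ∑ j, u (part s) j * v (part s) j / K (part s) j) :=
        sum_congr rfl fun s _ => by
          rw [weight, mul_assoc]
          simp only [pushforward, denominator]
          rw [Matrix.sum_markov_pushforward_mul_div (hQsupp (part s)) (hQsum (part s))]
    _ = _ := Matrix.sum_apply_part_mul hRsum fun a => ρ a * ∑ j, u a j * v a j / K a j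

/-- Covariance of weighted metrics under conditional embeddings. With
`R` a `k × l` stochastic partition matrix (indicator `R̄`, partition `part`), `Q⁽ᵃ⁾`
`m × n` stochastic partition matrices, `ρ ∈ Δ_{k-1}°` and `ρ' = ρR` strictly positive,
the conditional embedding `f̄(K) = R̄ᵀ(K ⊗ Q)` satisfies `f̄*(g^{ρ',n}) = g^{ρ,m}`:
`∑_s ρ'(s) ∑_t (f̄_*u)_{st}(f̄_*v)_{st}/f̄(K)_{st} = ∑_i ρ(i) ∑_j u_{ij}v_{ij}/K_{ij}`,
where `(f̄_*u)_{st} = ∑_{a,b} R̄_{as} Q⁽ᵃ⁾_{bt} u_{ab}`. -/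
theorem weighted_metric_covariant_under_conditional_embedding {k l m n : ℕ}
    (R : Matrix (Fin k) (Fin l) ℝ) (part : Fin l → Fin k)
    (hR0 : ∀ a s, 0 ≤ R a s)
    (hRsupp : ∀ a s, R a s ≠ 0 → part s = a)
    (hRsum : ∀ a : Fin k,
      ∑ s ∈ Finset.univ.filter (fun s => part s = a), R a s = 1)
    (Q : Fin k → Matrix (Fin m) (Fin n) ℝ)
    (colpart : Fin k → Fin n → Fin m)
    (hQ0 : ∀ a b t, 0 ≤ Q a b t)
    (hQsupp : ∀ a b t, Q a b t ≠ 0 → colpart a t = b)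
    (hQsum : ∀ a (b : Fin m),
      ∑ t ∈ Finset.univ.filter (fun t => colpart a t = b), Q a b t = 1)
    (ρ : Fin k → ℝ) (hρ : ∀ a, 0 < ρ a) (hρ1 : ∑ a, ρ a = 1)
    (hρ' : ∀ s : Fin l, 0 < ∑ a, ρ a * R a s)
    (K : Matrix (Fin k) (Fin m) ℝ)
    (hKpos : ∀ a b, 0 < K a b) (hKrow : ∀ a, ∑ b, K a b = 1)
    (u v : Matrix (Fin k) (Fin m) ℝ)
    (hu : ∀ a, ∑ b, u a b = 0) (hv : ∀ a, ∑ b, v a b = 0) :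
    ∑ s, (∑ a, ρ a * R a s) * ∑ t,
        (∑ a, ∑ b, (if part s = a then (1 : ℝ) else 0) * Q a b t * u a b)
        * (∑ a, ∑ b, (if part s = a then (1 : ℝ) else 0) * Q a b t * v a b)
        / (∑ a, (if part s = a then (1 : ℝ) else 0) * ∑ b, K a b * Q a b t)
      = ∑ i, ρ i * ∑ j, u i j * v i j / K i j :=
  weighted_metric_covariant_under_conditional_embedding_general R part hRsupp hRsum Q colpart hQsupp
    hQsum ρ K u v
end
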